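/- arXiv:1911.06016 — 3 statements merged into one kernel-verified Lean document; each statement's English description precedes it below -/
import Mathlib

section
/- Fix distinct reals c_1, ..., c_s. For any distinct λ_1, ..., λ_s ∈ ℂ \ {1}, there exists a unique pair ((θ_1,...,θ_s), D) ∈ ℂ^s × M_s(ℂ) such that V_c^1 = D V_{c-1}^1 + Θ (where Θ is the matrix with first column (θ_1,...,θ_s)^T and all other entries zero) and the spectrum of D is exactly {λ_1, ..., λ_s}. Moreover, if {λ_1,...,λ_s} is stable under complex conjugation, then the θ_i are real and D has real entries. -/
/-!
Since `(x + 1) ^ j = ∑ i, j.choose i * x ^ i`, we have `V_c = V_{c-1} P` for the Pascal matrix `P`,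
so the equation says `D = V (P - u e₀ᵀ) V⁻¹` with `V = V_{c-1}` and `u = V⁻¹ θ`: the question is
pole placement for the pair `(P, e₀)`. By Cramer's rule
`χ(P - u e₀ᵀ) = (X - 1) ^ s + φ u` with `φ u = (adj (X - P) u)₀`, linear in `u` with values of
degree `< s`. To see that `φ` is injective, pair `w = adj (X - P) u` with the rows `(n ^ j)_j`:
the resulting `a n` have degree `< s` and satisfy `X a(n) - a(n + 1) = (X - 1) ^ s ∑ⱼ u_j n ^ j`,
so `a 0 = φ u = 0` forces `∑ⱼ u_j n ^ j = 0` for every `n`, i.e. `u = 0`. Hence `φ` is a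
bijection onto the polynomials of degree `< s` and every monic characteristic polynomial of
degree `s` is attained exactly once. Reality follows from uniqueness: when the spectrum is stable
under conjugation, conjugating a solution gives a solution.
-/

open Matrix Polynomial

theorem Polynomial.Monic.sub_mem_degreeLT {R : Type*} [Ring R] {p q : R[X]} {n : ℕ}
    (hp : p.Monic) (hq : q.Monic) (hpn : p.natDegree = n) (hqn : q.natDegree = n) :
    p - q ∈ degreeLT R n := by
  nontriviality R
  rw [mem_degreeLT, ← hpn, ← degree_eq_natDegree hp.ne_zero]
  refine degree_sub_lt_left ?_ hp.ne_zero (by rw [hp.leadingCoeff, hq.leadingCoeff])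
  rw [degree_eq_natDegree hp.ne_zero, degree_eq_natDegree hq.ne_zero, hpn, hqn]

theorem Polynomial.map_prod_X_sub_C_eq_self {ι K : Type*} [Fintype ι] [Field K] (f : K →+* K)
    {lam : ι → K} (hlam : Function.Injective lam) (h : ∀ k, ∃ j, lam j = f (lam k)) :
    (∏ k, (X - C (lam k))).map f = ∏ k, (X - C (lam k)) := by
  choose τ hτ using h
  have hτinj : Function.Injective τ := fun a b hab =>
    hlam (f.injective (by rw [← hτ a, ← hτ b, hab]))
  simp only [Polynomial.map_prod, Polynomial.map_sub, map_X, map_C, ← hτ]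
  exact Fintype.prod_bijective τ (Finite.injective_iff_bijective.1 hτinj) _ _ fun k => rfl

namespace Matrix

section CommRing

variable {n R : Type*} [Fintype n] [DecidableEq n] [CommRing R]

theorem charmatrix_updateCol_C (M : Matrix n n R) (j : n) (b : n → R) :
    (charmatrix M).updateCol j (fun i => C (b i)) =
      (X : R[X]) • ((1 : Matrix n n R).updateCol j 0).map C + ((-M).updateCol j b).map C := by
  ext i k
  by_cases hk : k = j
  · simp [hk]
  · by_cases hik : i = k
    · simp [hk, hik, charmatrix_apply_eq, sub_eq_add_neg]
    · simp [hk, hik, one_apply_ne hik]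

/-- The leading coefficient vanishes because the `j`-th column loses its `X`. -/
theorem cramer_charmatrix_mem_degreeLT (M : Matrix n n R) (b : n → R) (j : n) :
    cramer (charmatrix M) (fun i => C (b i)) j ∈ degreeLT R (Fintype.card n) := by
  rw [mem_degreeLT, degree_lt_iff_coeff_zero, cramer_apply, charmatrix_updateCol_C]
  intro m hm
  obtain rfl | hm := hm.eq_or_lt
  · rw [coeff_det_X_add_C_card]
    exact det_eq_zero_of_column_eq_zero j fun i => by simp
  · exact coeff_eq_zero_of_natDegree_lt ((natDegree_det_X_add_C_le _ _).trans_lt hm)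

theorem dotProduct_cramer_charmatrix_mem_degreeLT (M : Matrix n n R) (v b : n → R) :
    (fun j => C (v j)) ⬝ᵥ cramer (charmatrix M) (fun i => C (b i)) ∈
      degreeLT R (Fintype.card n) :=
  Submodule.sum_mem _ fun j _ => by
    simpa only [smul_eq_C_mul] using
      Submodule.smul_mem _ (v j) (cramer_charmatrix_mem_degreeLT M b j)

theorem charmatrix_sub_vecMulVec_single (M : Matrix n n R) (u : n → R) (j : n) :
    charmatrix (M - vecMulVec u (Pi.single j 1)) =
      (charmatrix M).updateCol j ((fun i => charmatrix M i j) + fun i => C (u i)) := by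
  refine Matrix.ext fun i k => ?_
  by_cases hk : k = j
  · subst hk
    simp only [charmatrix_apply, sub_apply, vecMulVec_apply, Pi.single_eq_same, mul_one, map_sub,
      updateCol_self, Pi.add_apply]
    ring
  · simp [hk, charmatrix_apply, vecMulVec_apply]

theorem charpoly_sub_vecMulVec_single (M : Matrix n n R) (u : n → R) (j : n) :
    (M - vecMulVec u (Pi.single j 1)).charpoly =
      M.charpoly + cramer (charmatrix M) (fun i => C (u i)) j := by
  rw [charpoly, charmatrix_sub_vecMulVec_single, det_updateCol_add, updateCol_eq_self,
    cramer_apply, charpoly]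

theorem charpoly_mul_mul_nonsing_inv {V : Matrix n n R} (hV : IsUnit V.det) (M : Matrix n n R) :
    (V * M * V⁻¹).charpoly = M.charpoly := by
  rw [charpoly_mul_comm, ← Matrix.mul_assoc, nonsing_inv_mul _ hV, Matrix.one_mul]

theorem mul_eq_mul_add_vecMulVec_iff {V N D : Matrix n n R} (hV : IsUnit V.det) {θ e : n → R} :
    V * N = D * V + vecMulVec θ e ↔ D = V * (N - vecMulVec (V⁻¹ *ᵥ θ) e) * V⁻¹ := by
  rw [Matrix.mul_sub, mul_vecMulVec, mulVec_mulVec, mul_nonsing_inv _ hV, one_mulVec,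
    eq_comm, ← eq_sub_iff_add_eq]
  constructor
  · intro h
    rw [← h, Matrix.mul_assoc, mul_nonsing_inv _ hV, Matrix.mul_one]
  · rintro rfl
    rw [Matrix.mul_assoc, nonsing_inv_mul _ hV, Matrix.mul_one]

theorem existsUnique_mul_eq_mul_add_vecMulVec_of_existsUnique {V N : Matrix n n R}
    (hV : IsUnit V.det) {e : n → R} {P : R[X]} (h : ∃! u, (N - vecMulVec u e).charpoly = P) :
    ∃! p : (n → R) × Matrix n n R, V * N = p.2 * V + vecMulVec p.1 e ∧ p.2.charpoly = P := by
  obtain ⟨u, hu, huniq⟩ := h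
  refine ⟨(V *ᵥ u, V * (N - vecMulVec u e) * V⁻¹), ?_, ?_⟩
  · dsimp only
    rw [mul_eq_mul_add_vecMulVec_iff hV, mulVec_mulVec, nonsing_inv_mul _ hV, one_mulVec,
      charpoly_mul_mul_nonsing_inv hV]
    exact ⟨rfl, hu⟩
  · rintro ⟨θ, D⟩ ⟨hD, hχ⟩
    dsimp only at hD hχ
    rw [mul_eq_mul_add_vecMulVec_iff hV] at hD
    subst hD
    rw [charpoly_mul_mul_nonsing_inv hV] at hχ
    obtain rfl := huniq _ hχ
    rw [mulVec_mulVec, mul_nonsing_inv _ hV, one_mulVec]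

theorem map_eq_self_of_existsUnique {f : R →+* R} {V N : Matrix n n R} {e : n → R} {P : R[X]}
    (hV : V.map f = V) (hN : N.map f = N) (he : f ∘ e = e) (hP : P.map f = P)
    (h : ∃! p : (n → R) × Matrix n n R, V * N = p.2 * V + vecMulVec p.1 e ∧ p.2.charpoly = P)
    {θ : n → R} {D : Matrix n n R} (hsol : V * N = D * V + vecMulVec θ e ∧ D.charpoly = P) :
    f ∘ θ = θ ∧ D.map f = D := by
  have hsol' : V * N = D.map f * V + vecMulVec (f ∘ θ) e ∧ (D.map f).charpoly = P := by
    refine ⟨?_, by rw [charpoly_map, hsol.2, hP]⟩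
    have hΘ : (vecMulVec θ e).map f = vecMulVec (f ∘ θ) (f ∘ e) := by
      ext i j
      simp [vecMulVec_apply]
    simpa only [map_mul, map_add, RingHom.mapMatrix_apply, hV, hN, hΘ, he] using
      congrArg f.mapMatrix hsol.1
  exact Prod.ext_iff.1 (h.unique (y₁ := (f ∘ θ, D.map f)) (y₂ := (θ, D)) hsol' hsol)

end CommRing

section Field

variable {n K : Type*} [Fintype n] [DecidableEq n] [Field K]

theorem spectrum_eq_range_iff_charpoly_eq [IsAlgClosed K] (A : Matrix n n K) {lam : n → K}
    (hlam : Function.Injective lam) :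
    spectrum K A = Set.range lam ↔ A.charpoly = ∏ k, (X - C (lam k)) := by
  constructor
  · intro h
    have hroots : Finset.univ.val.map lam ≤ A.charpoly.roots := by
      rw [Multiset.le_iff_subset (Finset.univ.nodup.map hlam)]
      intro μ hμ
      obtain ⟨k, -, rfl⟩ := Multiset.mem_map.1 hμ
      rw [mem_roots A.charpoly_monic.ne_zero, ← mem_spectrum_iff_isRoot_charpoly, h]
      exact Set.mem_range_self k
    have hdvd := (Multiset.prod_X_sub_C_dvd_iff_le_roots A.charpoly_monic.ne_zero _).2 hroots
    rw [Multiset.map_map] at hdvd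
    refine (eq_of_dvd_of_natDegree_le_of_leadingCoeff hdvd (by simp) ?_).symm
    rw [A.charpoly_monic.leadingCoeff]
    exact (monic_prod_X_sub_C lam _).leadingCoeff
  · intro h
    ext μ
    rw [mem_spectrum_iff_isRoot_charpoly, h, isRoot_prod]
    simp [sub_eq_zero, eq_comm]

end Field

def pascal (s : ℕ) (R : Type*) [CommRing R] : Matrix (Fin s) (Fin s) R :=
  of fun i j => ((j : ℕ).choose i : R)

section Pascal

variable {R : Type*} [CommRing R] {s : ℕ}

theorem vecMul_pascal (x : R) :
    (fun i : Fin s => x ^ (i : ℕ)) ᵥ* pascal s R = fun j : Fin s => (x + 1) ^ (j : ℕ) := by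
  funext j
  have hj : Finset.range (j + 1) ⊆ Finset.range s := Finset.range_subset_range.2 j.2
  simp only [vecMul, dotProduct, pascal, of_apply, add_pow, one_pow, mul_one]
  rw [Fin.sum_univ_eq_sum_range (fun i => x ^ i * ((j : ℕ).choose i : R)),
    Finset.sum_subset hj fun i _ hi => ?_]
  rw [Nat.choose_eq_zero_of_lt (by simpa using hi), Nat.cast_zero, mul_zero]

theorem vandermonde_mul_pascal (v : Fin s → R) :
    vandermonde v * pascal s R = vandermonde fun i => v i + 1 := by
  ext i j
  exact congrFun (vecMul_pascal (v i)) j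

theorem map_pascal {S : Type*} [CommRing S] (f : R →+* S) : (pascal s R).map f = pascal s S := by
  ext i j
  simp [pascal]

theorem pascal_isUpperTriangular : (pascal s R).IsUpperTriangular := by
  intro i j hij
  simp [pascal, Nat.choose_eq_zero_of_lt (show (j : ℕ) < i from hij)]

theorem charpoly_pascal : (pascal s R).charpoly = (X - 1) ^ s := by
  rw [charpoly_of_isUpperTriangular _ pascal_isUpperTriangular]
  simp [pascal]

theorem vecMul_charmatrix_pascal (x : R) :
    (fun i : Fin s => C (x ^ (i : ℕ))) ᵥ* charmatrix (pascal s R) =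
      fun j : Fin s => X * C (x ^ (j : ℕ)) - C ((x + 1) ^ (j : ℕ)) := by
  funext j
  have h := RingHom.map_vecMul C (pascal s R) (fun i => x ^ (i : ℕ)) j
  rw [vecMul_pascal] at h
  simp only [Function.comp_def] at h
  rw [charmatrix, vecMul_sub, Pi.sub_apply, RingHom.mapMatrix_apply, ← h]
  simp [mul_comm]

theorem dotProduct_cramer_charmatrix_pascal (u : Fin s → R) (x : R) :
    X * ((fun j : Fin s => C (x ^ (j : ℕ))) ⬝ᵥ
          cramer (charmatrix (pascal s R)) fun i => C (u i)) -
        (fun j : Fin s => C ((x + 1) ^ (j : ℕ))) ⬝ᵥ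
          cramer (charmatrix (pascal s R)) (fun i => C (u i)) =
      (X - 1) ^ s * C ((fun j : Fin s => x ^ (j : ℕ)) ⬝ᵥ u) := by
  have h := congrArg ((fun j : Fin s => C (x ^ (j : ℕ))) ⬝ᵥ ·)
    (mulVec_cramer (charmatrix (pascal s R)) fun i => C (u i))
  simp only [dotProduct_mulVec, vecMul_charmatrix_pascal] at h
  rw [← charpoly, charpoly_pascal, dotProduct_smul, smul_eq_mul] at h
  convert h using 1
  · simp [dotProduct, sub_mul, Finset.mul_sum, mul_assoc]
  · simp [dotProduct]

/-- The left side of `dotProduct_cramer_charmatrix_pascal` has degree `< s`, the right side degree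
`s` unless it vanishes. -/
theorem dotProduct_cramer_charmatrix_pascal_eq_zero [IsDomain R] {u : Fin s → R} {x : R}
    (hx : (fun j : Fin s => C (x ^ (j : ℕ))) ⬝ᵥ
      cramer (charmatrix (pascal s R)) (fun i => C (u i)) = 0) :
    (fun j : Fin s => x ^ (j : ℕ)) ⬝ᵥ u = 0 ∧
      (fun j : Fin s => C ((x + 1) ^ (j : ℕ))) ⬝ᵥ
        cramer (charmatrix (pascal s R)) (fun i => C (u i)) = 0 := by
  have hrec := dotProduct_cramer_charmatrix_pascal u x
  rw [hx, mul_zero, zero_sub] at hrec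
  by_cases hz : (fun j : Fin s => x ^ (j : ℕ)) ⬝ᵥ u = 0
  · rw [hz, map_zero, mul_zero, neg_eq_zero] at hrec
    exact ⟨hz, hrec⟩
  · have hmem := dotProduct_cramer_charmatrix_mem_degreeLT (pascal s R)
      (fun j : Fin s => (x + 1) ^ (j : ℕ)) u
    have hdeg : ((X - 1 : R[X]) ^ s * C ((fun j : Fin s => x ^ (j : ℕ)) ⬝ᵥ u)).degree = s := by
      compute_degree!
    rw [Fintype.card_fin, mem_degreeLT, ← degree_neg, hrec, hdeg] at hmem
    exact absurd hmem (lt_irrefl _)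

theorem eq_zero_of_cramer_charmatrix_pascal_eq_zero [IsDomain R] [CharZero R] [NeZero s]
    {u : Fin s → R} (h : cramer (charmatrix (pascal s R)) (fun i => C (u i)) 0 = 0) : u = 0 := by
  have ha (m : ℕ) : (fun j : Fin s => C ((m : R) ^ (j : ℕ))) ⬝ᵥ
      cramer (charmatrix (pascal s R)) (fun i => C (u i)) = 0 := by
    induction m with
    | zero => simpa [dotProduct, zero_pow_eq, Fin.val_eq_zero_iff] using h
    | succ m ih => exact_mod_cast (dotProduct_cramer_charmatrix_pascal_eq_zero ih).2
  have hV : vandermonde (fun i : Fin s => (i : R)) *ᵥ u = 0 :=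
    funext fun i => (dotProduct_cramer_charmatrix_pascal_eq_zero (ha i)).1
  exact eq_zero_of_mulVec_eq_zero
    (det_vandermonde_ne_zero_iff.2 fun i j hij => Fin.ext (by exact_mod_cast hij)) hV

end Pascal

section PascalField

variable {K : Type*} [Field K] [CharZero K] {s : ℕ}

theorem existsUnique_cramer_charmatrix_pascal_eq [NeZero s] {r : K[X]} (hr : r ∈ degreeLT K s) :
    ∃! u : Fin s → K, cramer (charmatrix (pascal s K)) (fun i => C (u i)) 0 = r := by
  let Φ : (Fin s → K) →ₗ[K] degreeLT K s :=
    ((LinearMap.proj 0).comp (((cramer (charmatrix (pascal s K))).restrictScalars K).comp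
      ((Algebra.linearMap K K[X]).compLeft (Fin s)))).codRestrict _
      fun u => by
        have := cramer_charmatrix_mem_degreeLT (pascal s K) u 0
        rwa [Fintype.card_fin] at this
  have hΦ (u : Fin s → K) :
      (Φ u : K[X]) = cramer (charmatrix (pascal s K)) (fun i => C (u i)) 0 :=
    rfl
  have hinj : Function.Injective Φ := by
    rw [← LinearMap.ker_eq_bot, LinearMap.ker_eq_bot']
    exact fun u hu => eq_zero_of_cramer_charmatrix_pascal_eq_zero (by rw [← hΦ, hu]; rfl)
  have hbij : Function.Bijective Φ := by
    refine ⟨hinj, fun r => ?_⟩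
    have hsurj := LinearMap.injective_iff_surjective.1
      (show Function.Injective ((degreeLTEquiv K s).toLinearMap ∘ₗ Φ) from
        (degreeLTEquiv K s).injective.comp hinj)
    obtain ⟨u, hu⟩ := hsurj (degreeLTEquiv K s r)
    exact ⟨u, (degreeLTEquiv K s).injective hu⟩
  simpa [← hΦ, Subtype.ext_iff] using hbij.existsUnique ⟨r, hr⟩

theorem existsUnique_charpoly_pascal_sub_vecMulVec {P : K[X]} (hP : P.Monic)
    (hdeg : P.natDegree = s) :
    ∃! u : Fin s → K,
      (pascal s K - vecMulVec u fun j : Fin s => if (j : ℕ) = 0 then 1 else 0).charpoly = P := by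
  rcases s with _ | s
  · refine ⟨0, ?_, fun _ _ => Subsingleton.elim _ _⟩
    dsimp only
    rw [charpoly_isEmpty, hP.natDegree_eq_zero.1 hdeg]
  have he : (fun j : Fin (s + 1) => if (j : ℕ) = 0 then (1 : K) else 0) = Pi.single 0 1 := by
    ext j
    simp [Fin.val_eq_zero_iff, Pi.single_apply]
  have hr : P - (X - 1) ^ (s + 1) ∈ degreeLT K (s + 1) := by
    rw [← charpoly_pascal]
    exact hP.sub_mem_degreeLT (charpoly_monic _) hdeg (by simp)
  simp only [he, charpoly_sub_vecMulVec_single, charpoly_pascal, ← eq_sub_iff_add_eq']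
  exact existsUnique_cramer_charmatrix_pascal_eq hr

end PascalField

end Matrix

theorem stmt_12_general (s : ℕ) (c : Fin s → ℝ) (hc : Function.Injective c)
    (lam : Fin s → ℂ) (hlam : Function.Injective lam) :
    (∃! p : (Fin s → ℂ) × Matrix (Fin s) (Fin s) ℂ,
      Matrix.of (fun i j : Fin s => (c i : ℂ) ^ (j : ℕ)) =
          p.2 * Matrix.of (fun i j : Fin s => ((c i : ℂ) - 1) ^ (j : ℕ)) +
            Matrix.of (fun i j : Fin s => if (j : ℕ) = 0 then p.1 i else 0) ∧
        spectrum ℂ p.2 = Set.range lam) ∧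
    ((∀ k, ∃ j, lam j = (starRingEnd ℂ) (lam k)) →
      ∀ p : (Fin s → ℂ) × Matrix (Fin s) (Fin s) ℂ,
        (Matrix.of (fun i j : Fin s => (c i : ℂ) ^ (j : ℕ)) =
            p.2 * Matrix.of (fun i j : Fin s => ((c i : ℂ) - 1) ^ (j : ℕ)) +
              Matrix.of (fun i j : Fin s => if (j : ℕ) = 0 then p.1 i else 0) ∧
          spectrum ℂ p.2 = Set.range lam) →
        (∀ i, (p.1 i).im = 0) ∧ (∀ i j, (p.2 i j).im = 0)) := by
  set V : Matrix (Fin s) (Fin s) ℂ := vandermonde fun i => (c i : ℂ) - 1 with hVdef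
  set e : Fin s → ℂ := fun j => if (j : ℕ) = 0 then 1 else 0
  have hV : IsUnit V.det :=
    (det_vandermonde_ne_zero_iff.2 fun i j h => hc (by simpa using h)).isUnit
  have hVc : of (fun i j : Fin s => (c i : ℂ) ^ (j : ℕ)) = V * pascal s ℂ := by
    rw [hVdef, vandermonde_mul_pascal]
    simp [vandermonde]
  have hΘ (θ : Fin s → ℂ) :
      of (fun i j : Fin s => if (j : ℕ) = 0 then θ i else 0) = vecMulVec θ e := by
    ext i j
    simp [e, vecMulVec_apply]
  have hsol := existsUnique_mul_eq_mul_add_vecMulVec_of_existsUnique hV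
    (existsUnique_charpoly_pascal_sub_vecMulVec (monic_prod_X_sub_C lam Finset.univ) (by simp))
  simp only [hVc, show of (fun i j : Fin s => ((c i : ℂ) - 1) ^ (j : ℕ)) = V from rfl, hΘ,
    spectrum_eq_range_iff_charpoly_eq _ hlam]
  refine ⟨hsol, fun hconj p hp => ?_⟩
  have hVreal : V.map (starRingEnd ℂ) = V := by
    ext i j
    simp [V, vandermonde]
  have hereal : starRingEnd ℂ ∘ e = e := by
    ext j
    by_cases hj : (j : ℕ) = 0 <;> simp [e, hj]
  obtain ⟨hθ, hD⟩ := map_eq_self_of_existsUnique hVreal (map_pascal _) hereal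
    (map_prod_X_sub_C_eq_self _ hlam hconj) hsol hp
  exact ⟨fun i => Complex.conj_eq_iff_im.1 (congrFun hθ i),
    fun i j => Complex.conj_eq_iff_im.1 (congrFun₂ hD i j)⟩

theorem stmt_12 (s : ℕ) (c : Fin s → ℝ) (hc : Function.Injective c)
    (lam : Fin s → ℂ) (hlam : Function.Injective lam) (h1 : ∀ k, lam k ≠ 1) :
    (∃! p : (Fin s → ℂ) × Matrix (Fin s) (Fin s) ℂ,
      Matrix.of (fun i j : Fin s => (c i : ℂ) ^ (j : ℕ)) =
          p.2 * Matrix.of (fun i j : Fin s => ((c i : ℂ) - 1) ^ (j : ℕ)) +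
            Matrix.of (fun i j : Fin s => if (j : ℕ) = 0 then p.1 i else 0) ∧
        spectrum ℂ p.2 = Set.range lam) ∧
    ((∀ k, ∃ j, lam j = (starRingEnd ℂ) (lam k)) →
      ∀ p : (Fin s → ℂ) × Matrix (Fin s) (Fin s) ℂ,
        (Matrix.of (fun i j : Fin s => (c i : ℂ) ^ (j : ℕ)) =
            p.2 * Matrix.of (fun i j : Fin s => ((c i : ℂ) - 1) ^ (j : ℕ)) +
              Matrix.of (fun i j : Fin s => if (j : ℕ) = 0 then p.1 i else 0) ∧
          spectrum ℂ p.2 = Set.range lam) →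
        (∀ i, (p.1 i).im = 0) ∧ (∀ i j, (p.2 i j).im = 0)) :=
  stmt_12_general s c hc lam hlam
end

section
/- Fix distinct reals c_1, ..., c_s. There exist D ∈ M_s(ℝ) and θ_1, ..., θ_s ∈ ℝ such that V_c^1 = D V_{c-1}^1 + Θ (consistency of order s) and the spectral radius of D is strictly less than 1 (strong stability). -/
/-!
Write `T` for the Taylor shift `p(X) ↦ p(X + 1)` in the monomial basis, so that
`V_c = V_{c-1} T`. For the nodes `-1, …, -s` with Vandermonde matrix `W`, shifting by one
moves every node onto the previous one, except the first which lands on `0`: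
`W T = N W + e₀ e₀ᵀ` with `N` the nilpotent lower shift. Conjugating by `P = V_{c-1} W⁻¹` gives
`V_c = (P N P⁻¹) V_{c-1} + P e₀ e₀ᵀ`, and `D = P N P⁻¹` is nilpotent, so its spectrum is `{0}`.
-/

open Matrix Function

theorem SemiconjBy.isNilpotent {M : Type*} [MonoidWithZero M] {a x y : M}
    (h : SemiconjBy a x y) (ha : IsUnit a) (hx : IsNilpotent x) : IsNilpotent y := by
  obtain ⟨k, hk⟩ := hx
  refine ⟨k, ha.mul_left_eq_zero.mp ?_⟩
  rw [← (h.pow_right k).eq, hk, mul_zero]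

theorem IsNilpotent.eq_zero_of_mem_spectrum {R A : Type*} [Field R] [Ring A] [Algebra R A]
    {a : A} (ha : IsNilpotent a) {μ : R} (hμ : μ ∈ spectrum R a) : μ = 0 := by
  by_contra hμ0
  refine spectrum.mem_iff.mp hμ ?_
  rw [sub_eq_add_neg]
  exact ha.neg.isUnit_add_left_of_commute ((isUnit_iff_ne_zero.mpr hμ0).map (algebraMap R A))
    (Commute.neg_left (Algebra.commutes μ a).symm)

namespace Matrix

variable {R : Type*} {n : ℕ}

/-- The matrix of `Polynomial.taylor a` on polynomials of degree `< n`, in the monomial basis. -/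
def taylorMatrix [CommRing R] (n : ℕ) (a : R) : Matrix (Fin n) (Fin n) R :=
  of fun k j => ((j : ℕ).choose k : R) * a ^ ((j : ℕ) - k)

theorem vandermonde_add_const [CommRing R] (v : Fin n → R) (a : R) :
    vandermonde (fun i => v i + a) = vandermonde v * taylorMatrix n a := by
  ext i j
  rw [vandermonde_apply, add_pow, mul_apply]
  simp only [vandermonde_apply, taylorMatrix, of_apply]
  rw [Fin.sum_univ_eq_sum_range
      (fun k => v i ^ k * (((j : ℕ).choose k : R) * a ^ ((j : ℕ) - k))) n,
    ← Finset.sum_subset (Finset.range_subset_range.mpr j.isLt)]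
  · exact Finset.sum_congr rfl fun k _ => by ring
  · intro k _ hk
    rw [Nat.choose_eq_zero_of_lt (by simpa using hk)]
    simp

def lowerShift (R : Type*) [Zero R] [One R] (n : ℕ) : Matrix (Fin n) (Fin n) R :=
  of fun i j => if (i : ℕ) = j + 1 then 1 else 0

theorem lowerShift_apply [Zero R] [One R] (i j : Fin n) :
    lowerShift R n i j = if (i : ℕ) = j + 1 then 1 else 0 :=
  rfl

theorem lowerShift_pow_apply_of_lt [Semiring R] {k : ℕ} {i j : Fin n} (hij : (i : ℕ) < j + k) :
    (lowerShift R n ^ k) i j = 0 := by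
  induction k generalizing i with
  | zero => exact one_apply_ne (Fin.ne_of_lt hij)
  | succ k ih =>
    rw [pow_succ', mul_apply]
    refine Finset.sum_eq_zero fun l _ => ?_
    rw [lowerShift_apply]
    split_ifs with h
    · rw [ih (by omega), mul_zero]
    · rw [zero_mul]

theorem isNilpotent_lowerShift [Semiring R] : IsNilpotent (lowerShift R n) :=
  ⟨n, ext fun _ _ => lowerShift_pow_apply_of_lt (by omega)⟩

theorem vandermonde_neg_succ_mul_taylorMatrix_one [CommRing R] :
    vandermonde (fun m : Fin (n + 1) => -((m : ℕ) + 1 : R)) * taylorMatrix (n + 1) 1 =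
      lowerShift R (n + 1) * vandermonde (fun m : Fin (n + 1) => -((m : ℕ) + 1 : R)) +
        of (fun i j : Fin (n + 1) => if i = 0 then 0 ^ (j : ℕ) else 0) := by
  rw [← vandermonde_add_const]
  ext i j
  refine Fin.cases ?_ (fun i => ?_) i
  · simp [mul_apply, lowerShift_apply]
  · rw [add_apply, of_apply, if_neg (Fin.succ_ne_zero i), add_zero, mul_apply,
      Finset.sum_eq_single i.castSucc]
    · simp [lowerShift_apply]
    · intro l _ hl
      rw [lowerShift_apply, if_neg (fun h => hl (Fin.ext (by simp at h ⊢; omega))), zero_mul]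
    · simp

end Matrix

theorem exists_isNilpotent_vandermonde_eq_mul_vandermonde_sub_one_add {K : Type*} [Field K]
    [CharZero K] {n : ℕ} {c : Fin n → K} (hc : Injective c) :
    ∃ (D : Matrix (Fin n) (Fin n) K) (θ : Fin n → K), IsNilpotent D ∧
      vandermonde c = D * vandermonde (fun i => c i - 1) +
        of (fun i j : Fin n => if (j : ℕ) = 0 then θ i else 0) := by
  rcases n with _ | n
  · exact ⟨0, 0, IsNilpotent.zero, Subsingleton.elim _ _⟩
  set V := vandermonde fun i => c i - 1
  set W := vandermonde fun m : Fin (n + 1) => -((m : ℕ) + 1 : K)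
  set E := of fun i j : Fin (n + 1) => if i = 0 then (0 : K) ^ (j : ℕ) else 0
  have hV : IsUnit V.det := (det_vandermonde_ne_zero_iff.mpr
    fun i j h => hc (sub_left_injective h)).isUnit
  have hW : IsUnit W.det := (det_vandermonde_ne_zero_iff.mpr
    fun i j h => Fin.ext (Nat.cast_injective (add_left_injective 1 (neg_injective h)))).isUnit
  have hVB : vandermonde c = V * taylorMatrix (n + 1) 1 := by
    rw [← vandermonde_add_const]; simp
  set P := V * W⁻¹
  have hP : IsUnit P.det := by rw [det_mul]; exact hV.mul (isUnit_nonsing_inv_det W hW)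
  have hVP : V = P * W := (nonsing_inv_mul_cancel_right W V hW).symm
  clear_value V P
  set N := lowerShift K (n + 1)
  refine ⟨P * N * P⁻¹, fun i => P i 0, ?_, ?_⟩
  · refine SemiconjBy.isNilpotent (a := P) ?_ ((isUnit_iff_isUnit_det P).mpr hP)
      isNilpotent_lowerShift
    exact (nonsing_inv_mul_cancel_right P (P * N) hP).symm
  · calc vandermonde c = P * (W * taylorMatrix (n + 1) 1) := by rw [hVB, hVP, mul_assoc]
      _ = P * N * P⁻¹ * (P * W) + P * E := by
        rw [vandermonde_neg_succ_mul_taylorMatrix_one, mul_add, ← mul_assoc, ← mul_assoc,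
          nonsing_inv_mul_cancel_right _ _ hP]
      _ = _ := by
        rw [← hVP]
        congr 1
        ext i j
        rw [mul_apply, Finset.sum_eq_single 0 (fun k _ hk => by simp [E, hk]) (by simp)]
        rcases eq_or_ne j 0 with rfl | hj
        · simp [E]
        · simp [E, hj, Fin.val_ne_zero_iff.mpr hj]

theorem stmt_13 (s : ℕ) (c : Fin s → ℝ) (hc : Function.Injective c) :
    ∃ (D : Matrix (Fin s) (Fin s) ℝ) (θ : Fin s → ℝ),
      Matrix.vandermonde c =
          D * Matrix.vandermonde (fun i => c i - 1) +
            Matrix.of (fun i j : Fin s => if (j : ℕ) = 0 then θ i else 0) ∧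
      ∀ μ : ℂ, μ ∈ spectrum ℂ (D.map Complex.ofReal) → ‖μ‖ < 1 := by
  obtain ⟨D, θ, hD, hV⟩ := exists_isNilpotent_vandermonde_eq_mul_vandermonde_sub_one_add hc
  refine ⟨D, θ, hV, fun μ hμ => ?_⟩
  rw [(hD.map Complex.ofRealHom.mapMatrix).eq_zero_of_mem_spectrum hμ, norm_zero]
  exact one_pos
end

section
/- Let B be the N×N finite-difference discrete Dirichlet Laplacian (tridiagonal with diagonal −2/δx² and off-diagonal 1/δx²), h > 0, and γ ∈ ℝ^N a nonnegative vector. Set A = I − (h/2)B − (h/2) diag(γ) and suppose (energy) u_{n+1} solves A u_{n+1} = (I + (h/2)B + (h/2) diag(γ)) u_n, with γ = γ_{n+1/2} given by the relaxation update γ_{n+1/2} = (1/2)γ_{n−1/2} + (1/2) u_n^{∘2}. Define the discrete energy E(u, γ) = −(1/2)⟨u, B u⟩ − (1/2)⟨γ, u^{∘2}⟩ + (1/4)⟨γ, γ⟩ with ⟨v,w⟩ = δx Σ_k v(k) w(k). Then (1/h)‖u_{n+1} − u_n‖² + (3/4)‖γ_{n+1/2} − γ_{n−1/2}‖² = E(u_n,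 γ_{n−1/2}) − E(u_{n+1}, γ_{n+1/2}); in particular E(u_{n+1}, γ_{n+1/2}) ≤ E(u_n, γ_{n−1/2}). -/
/-!
Pairing the Crank–Nicolson step `u⁺ - u = (h/2) M (u⁺ + u)`, `M = B + diag γ⁺`, with `u⁺ - u`
turns its right-hand side into `(h/2)(⟨u⁺, M u⁺⟩ - ⟨u, M u⟩)`, the cross terms cancelling by
symmetry of `M`. The relaxation update makes `u²` an affine function of `γ⁺, γ⁻`, which converts
`⟨γ⁺, u²⟩` into the remaining terms of the energy difference.
-/

open Matrix

namespace Matrix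

variable {ι R : Type*} [Fintype ι] [CommRing R]

theorem sub_eq_smul_mulVec_add_of_mulVec_eq [DecidableEq ι] {M : Matrix ι ι R} {c : R}
    {x y : ι → R} (hxy : (1 - c • M) *ᵥ x = (1 + c • M) *ᵥ y) :
    x - y = c • M *ᵥ (x + y) := by
  simp only [sub_mulVec, add_mulVec, one_mulVec, smul_mulVec, mulVec_add] at hxy ⊢
  linear_combination (norm := module) hxy

theorem IsSymm.dotProduct_mulVec_comm {M : Matrix ι ι R} (hM : M.IsSymm) (x y : ι → R) :
    y ⬝ᵥ M *ᵥ x = x ⬝ᵥ M *ᵥ y := by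
  rw [dotProduct_mulVec, ← mulVec_transpose, hM.eq, dotProduct_comm]

theorem IsSymm.dotProduct_sub_self_of_eq_smul_mulVec_add {M : Matrix ι ι R} (hM : M.IsSymm)
    {c : R} {x y : ι → R} (hxy : x - y = c • M *ᵥ (x + y)) :
    (x - y) ⬝ᵥ (x - y) = c * (x ⬝ᵥ M *ᵥ x - y ⬝ᵥ M *ᵥ y) := by
  nth_rewrite 2 [hxy]
  rw [dotProduct_smul, mulVec_add, dotProduct_add, sub_dotProduct, sub_dotProduct,
    hM.dotProduct_mulVec_comm x y, smul_eq_mul]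
  ring

theorem dotProduct_diagonal_mulVec_self [DecidableEq ι] (γ x : ι → R) :
    x ⬝ᵥ diagonal γ *ᵥ x = ∑ k, γ k * x k ^ 2 := by
  simp only [dotProduct, mulVec_diagonal]
  exact Finset.sum_congr rfl fun k _ => by ring

end Matrix

theorem relaxation_energy_identity {ι : Type*} [Fintype ι] {γm γp u : ι → ℝ}
    (hrelax : γp = fun k => (1 / 2) * γm k + (1 / 2) * u k ^ 2) :
    (3 / 4) * ∑ k, (γp k - γm k) * (γp k - γm k) =
      (1 / 2) * (∑ k, γp k * u k ^ 2 - ∑ k, γm k * u k ^ 2) +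
        (1 / 4) * (∑ k, γm k * γm k - ∑ k, γp k * γp k) := by
  simp only [Finset.mul_sum, ← Finset.sum_sub_distrib, ← Finset.sum_add_distrib]
  refine Finset.sum_congr rfl fun k _ => ?_
  subst hrelax
  ring

theorem stmt_19_general (N : ℕ) (δx : ℝ) (hδx : 0 < δx) (h : ℝ) (hh : 0 < h)
    (B : Matrix (Fin N) (Fin N) ℝ) (hB : B.IsSymm)
    (un un1 γm γp : Fin N → ℝ)
    (hrelax : γp = fun k => (1 / 2) * γm k + (1 / 2) * un k ^ 2)
    (hscheme : (1 - (h / 2) • B - (h / 2) • Matrix.diagonal γp).mulVec un1 =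
      (1 + (h / 2) • B + (h / 2) • Matrix.diagonal γp).mulVec un) :
    (1 / h) * (δx * ∑ k, (un1 k - un k) * (un1 k - un k)) +
        (3 / 4) * (δx * ∑ k, (γp k - γm k) * (γp k - γm k)) =
      (-(1 / 2) * (δx * ∑ k, un k * B.mulVec un k) -
          (1 / 2) * (δx * ∑ k, γm k * un k ^ 2) +
          (1 / 4) * (δx * ∑ k, γm k * γm k)) -
        (-(1 / 2) * (δx * ∑ k, un1 k * B.mulVec un1 k) -
          (1 / 2) * (δx * ∑ k, γp k * un1 k ^ 2) +
          (1 / 4) * (δx * ∑ k, γp k * γp k)) ∧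
    (-(1 / 2) * (δx * ∑ k, un1 k * B.mulVec un1 k) -
        (1 / 2) * (δx * ∑ k, γp k * un1 k ^ 2) +
        (1 / 4) * (δx * ∑ k, γp k * γp k)) ≤
      (-(1 / 2) * (δx * ∑ k, un k * B.mulVec un k) -
        (1 / 2) * (δx * ∑ k, γm k * un k ^ 2) +
        (1 / 4) * (δx * ∑ k, γm k * γm k)) := by
  rw [sub_sub, ← smul_add, add_assoc, ← smul_add] at hscheme
  have hu := (hB.add (isSymm_diagonal γp)).dotProduct_sub_self_of_eq_smul_mulVec_add
    (sub_eq_smul_mulVec_add_of_mulVec_eq hscheme)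
  simp only [add_mulVec, dotProduct_add, dotProduct_diagonal_mulVec_self] at hu
  simp only [dotProduct, Pi.sub_apply] at hu
  have hγ := relaxation_energy_identity hrelax
  have identity : (1 / h) * (δx * ∑ k, (un1 k - un k) * (un1 k - un k)) +
        (3 / 4) * (δx * ∑ k, (γp k - γm k) * (γp k - γm k)) =
      (-(1 / 2) * (δx * ∑ k, un k * B.mulVec un k) -
          (1 / 2) * (δx * ∑ k, γm k * un k ^ 2) +
          (1 / 4) * (δx * ∑ k, γm k * γm k)) -
        (-(1 / 2) * (δx * ∑ k, un1 k * B.mulVec un1 k) -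
          (1 / 2) * (δx * ∑ k, γp k * un1 k ^ 2) +
          (1 / 4) * (δx * ∑ k, γp k * γp k)) := by
    linear_combination (norm := skip) (δx / h) * hu + δx * hγ
    field_simp
    ring
  refine ⟨identity, sub_nonneg.mp ?_⟩
  rw [← identity]
  have := Finset.sum_nonneg fun k (_ : k ∈ Finset.univ) => mul_self_nonneg (un1 k - un k)
  have := Finset.sum_nonneg fun k (_ : k ∈ Finset.univ) => mul_self_nonneg (γp k - γm k)
  positivity

theorem stmt_19 (N : ℕ) (δx : ℝ) (hδx : 0 < δx) (h : ℝ) (hh : 0 < h)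
    (B : Matrix (Fin N) (Fin N) ℝ) (hB : B.IsSymm)
    (un un1 γm γp : Fin N → ℝ) (hγ : ∀ k, 0 ≤ γp k)
    (hrelax : γp = fun k => (1 / 2) * γm k + (1 / 2) * un k ^ 2)
    (hscheme : (1 - (h / 2) • B - (h / 2) • Matrix.diagonal γp).mulVec un1 =
      (1 + (h / 2) • B + (h / 2) • Matrix.diagonal γp).mulVec un) :
    (1 / h) * (δx * ∑ k, (un1 k - un k) * (un1 k - un k)) +
        (3 / 4) * (δx * ∑ k, (γp k - γm k) * (γp k - γm k)) =
      (-(1 / 2) * (δx * ∑ k, un k * B.mulVec un k) -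
          (1 / 2) * (δx * ∑ k, γm k * un k ^ 2) +
          (1 / 4) * (δx * ∑ k, γm k * γm k)) -
        (-(1 / 2) * (δx * ∑ k, un1 k * B.mulVec un1 k) -
          (1 / 2) * (δx * ∑ k, γp k * un1 k ^ 2) +
          (1 / 4) * (δx * ∑ k, γp k * γp k)) ∧
    (-(1 / 2) * (δx * ∑ k, un1 k * B.mulVec un1 k) -
        (1 / 2) * (δx * ∑ k, γp k * un1 k ^ 2) +
        (1 / 4) * (δx * ∑ k, γp k * γp k)) ≤
      (-(1 / 2) * (δx * ∑ k, un k * B.mulVec un k) -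
        (1 / 2) * (δx * ∑ k, γm k * un k ^ 2) +
        (1 / 4) * (δx * ∑ k, γm k * γm k)) :=
  stmt_19_general N δx hδx h hh B hB un un1 γm γp hrelax hscheme
end
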